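/- For every integer n with n ≡ 5 (mod 8) and 5 ≤ n ≤ 205, the n-crossing permutations over S_{n+3} generate exactly the group of even parity-preserving permutations: C(n, n+3) = P_{n+3} ∩ A_{n+3}, the subgroup of all σ ∈ S_{n+3} satisfying σ(i) ≡ i (mod 2) for all i and having sign +1. -/

import Mathlib

/-- The underlying function of the `n`-crossing permutation `π_j` over `{1, …, m}` (as a
function on `ℕ`): it sends `j + k` to `j + n - 1 - k` for `0 ≤ k ≤ n - 1` and fixes all
other points. -/
def crossFun (n j i : ℕ) : ℕ :=
  if j ≤ i ∧ i < j + n then 2 * j + n - 1 - i else i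

lemma crossFun_involutive (n j : ℕ) : Function.Involutive (crossFun n j) := by
  intro i
  unfold crossFun
  split_ifs <;> omega

/-- The `n`-crossing permutation `π_j`, viewed as a permutation of `ℕ` fixing every point
outside `{j, …, j + n - 1}`. -/
def crossPerm (n j : ℕ) : Equiv.Perm ℕ :=
  Function.Involutive.toPerm _ (crossFun_involutive n j)

/-- `C n m` is the subgroup of the symmetric group `S_m` (realized as permutations of `ℕ`
supported on `{1, …, m}`) generated by the `n`-crossing permutations `π_1, …, π_{m-n+1}`. -/
def C (n m : ℕ) : Subgroup (Equiv.Perm ℕ) :=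
  Subgroup.closure {σ | ∃ j, 1 ≤ j ∧ j ≤ m - n + 1 ∧ σ = crossPerm n j}


/-- A (finitely supported) permutation is even if it is a product of an even number of
transpositions. For a permutation supported on `{1, ..., m}` this says exactly that it lies
in the alternating group `A_m`. -/
def IsEvenPerm (s : Equiv.Perm ℕ) : Prop :=
  ∃ l : List (Equiv.Perm ℕ), (∀ t ∈ l, t.IsSwap) ∧ l.prod = s ∧ Even l.length

/-!
Each `π_j` reverses `n` consecutive points; for odd `n` it preserves parity, and for
`n = 4K + 1` it is the product of the `2K` transpositions `(j + i, j + 4K - i)`, `i < 2K`, so it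
is even. This gives `C(n, n + 3) ≤ P ∩ A`.

Conversely, with the pivot `p = j + n + 1` one checks
`π_{j+1} π_j π_{j+1} π_{j+2} = (p, j+2) (p, j)`, and conjugating by `π_{j+1} π_j`, which fixes
`p` and acts as `x ↦ x + 2` on `j, …, j + n - 2`, yields every `(p, x) (p, y)` with `x, y` in
the parity class of `j`. These products generate the even permutations of that class, so every
permutation `u` of the class lies in `C` or in `(j, j+2) C`, according to its sign. An element of
`P ∩ A` is (odd part) * (even part) with parts of equal sign: if both are even it lies in `C`,
if both are odd it lies in `(1 3)(2 4) C`. Finally `(1 3)(2 4) ∈ C` because the odd and the even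
part of `π_1` each consist of `K` transpositions, and `K` is odd exactly when `n ≡ 5 (mod 8)`.
-/

open Equiv

section Swaps

variable {α : Type*}

def swapsOn [DecidableEq α] (s : Set α) : Set (Perm α) :=
  {τ | ∃ a ∈ s, ∃ b ∈ s, a ≠ b ∧ swap a b = τ}

def supportedPerms (s : Set α) : Subgroup (Perm α) where
  carrier := {σ | ∀ x, σ x ≠ x → x ∈ s}
  one_mem' x h := (h rfl).elim
  mul_mem' {σ τ} hσ hτ x h := by
    by_cases hx : τ x = x
    · exact hσ x (by rwa [Perm.mul_apply, hx] at h)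
    · exact hτ x hx
  inv_mem' {σ} hσ x h := hσ x fun e => h (by rw [Perm.inv_eq_iff_eq, e])

def preservingPerms {β : Type*} (f : α → β) : Subgroup (Perm α) where
  carrier := {σ | ∀ x, f (σ x) = f x}
  one_mem' _ := rfl
  mul_mem' hσ hτ x := (hσ _).trans (hτ x)
  inv_mem' {σ} hσ x := by simpa using (hσ (σ⁻¹ x)).symm

lemma mem_preservingPerms {β : Type*} {f : α → β} {σ : Perm α} :
    σ ∈ preservingPerms f ↔ ∀ x, f (σ x) = f x := Iff.rfl

lemma supportedPerms_mono {s t : Set α} (h : s ⊆ t) : supportedPerms s ≤ supportedPerms t :=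
  fun _ hσ x hx => h (hσ x hx)

lemma commute_of_mem_supportedPerms {s t : Set α} (hst : Disjoint s t) {σ τ : Perm α}
    (hσ : σ ∈ supportedPerms s) (hτ : τ ∈ supportedPerms t) : Commute σ τ :=
  Perm.Disjoint.commute fun x => by
    by_contra! h
    exact Set.disjoint_left.mp hst (hσ x h.1) (hτ x h.2)

lemma exists_mul_eq_of_mem_supportedPerms {s : Set α} {p : α → Prop} [DecidablePred p]
    {σ : Perm α} (hσ : σ ∈ supportedPerms s) (hp : ∀ x, p (σ x) ↔ p x) :
    ∃ u ∈ supportedPerms {x ∈ s | p x}, ∃ v ∈ supportedPerms {x ∈ s | ¬p x}, σ = u * v := by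
  set u := Perm.ofSubtype (σ.subtypePerm hp)
  have hu : ∀ x, p x → u x = σ x := fun x hx => Perm.ofSubtype_subtypePerm_of_mem hp hx
  have hu' : ∀ x, ¬p x → u x = x := fun x hx => Perm.ofSubtype_subtypePerm_of_not_mem hp hx
  refine ⟨u, fun x hx => ?_, u⁻¹ * σ, fun x hx => ?_, (mul_inv_cancel_left u σ).symm⟩
  · by_cases hpx : p x
    · exact ⟨hσ x (hu x hpx ▸ hx), hpx⟩
    · exact (hx (hu' x hpx)).elim
  · rw [Perm.mul_apply, Ne, Perm.inv_eq_iff_eq] at hx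
    by_cases hpx : p x
    · exact (hx (hu x hpx).symm).elim
    · exact ⟨hσ x fun h => hx (by rw [h, hu' x hpx]), hpx⟩

variable [DecidableEq α]

lemma swapsOn_mono {s t : Set α} (h : s ⊆ t) : swapsOn s ⊆ swapsOn t := by
  rintro _ ⟨a, ha, b, hb, hab, rfl⟩
  exact ⟨a, h ha, b, h hb, hab, rfl⟩

lemma isSwap_of_mem_swapsOn {s : Set α} {τ : Perm α} (h : τ ∈ swapsOn s) : τ.IsSwap := by
  obtain ⟨a, -, b, -, hab, rfl⟩ := h
  exact ⟨a, b, hab, rfl⟩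

lemma mul_self_of_mem_swapsOn {s : Set α} {τ : Perm α} (h : τ ∈ swapsOn s) : τ * τ = 1 := by
  obtain ⟨a, -, b, -, -, rfl⟩ := h
  exact swap_mul_self a b

lemma inv_eq_of_mem_swapsOn {s : Set α} {τ : Perm α} (h : τ ∈ swapsOn s) : τ⁻¹ = τ :=
  inv_eq_of_mul_eq_one_right (mul_self_of_mem_swapsOn h)

lemma swapsOn_subset_supportedPerms (s : Set α) : swapsOn s ⊆ supportedPerms s := by
  rintro _ ⟨a, ha, b, hb, -, rfl⟩ x hx
  rw [swap_apply_def] at hx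
  split_ifs at hx with hxa hxb
  exacts [hxa ▸ ha, hxb ▸ hb, (hx rfl).elim]

lemma closure_swapsOn_eq {s : Set α} (hs : s.Finite) :
    Subgroup.closure (swapsOn s) = supportedPerms s := by
  refine le_antisymm ((Subgroup.closure_le _).mpr (swapsOn_subset_supportedPerms s)) ?_
  intro σ hσ
  rw [mem_closure_isSwap fun _ => isSwap_of_mem_swapsOn]
  refine ⟨hs.subset fun x hx => hσ x hx, fun x => ?_⟩
  by_cases hx : σ x = x
  · rw [hx]
    exact MulAction.mem_orbit_self x
  · have hσx : σ (σ x) ≠ σ x := fun h => hx (σ.injective h)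
    exact ⟨⟨swap x (σ x), Subgroup.subset_closure
      ⟨x, hσ x hx, σ x, hσ _ hσx, Ne.symm hx, rfl⟩⟩, swap_apply_left x (σ x)⟩

end Swaps

section Pivot

variable {α : Type*} [DecidableEq α] {H : Subgroup (Perm α)}

lemma swap_mul_swap_mem_trans {p a b c : α} (hab : swap p a * swap p b ∈ H)
    (hbc : swap p b * swap p c ∈ H) : swap p a * swap p c ∈ H := by
  simpa [mul_assoc] using mul_mem hab hbc

lemma swap_mul_swap_mem_symm {p a b : α} (h : swap p a * swap p b ∈ H) :
    swap p b * swap p a ∈ H := by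
  simpa using inv_mem h

lemma swap_mul_swap_mem_of_shift {g : Perm α} (hg : g ∈ H) {p : α} (hgp : g p = p)
    {f : ℕ → α} {N : ℕ} (hgf : ∀ k < N, g (f k) = f (k + 1))
    (h₀ : swap p (f 1) * swap p (f 0) ∈ H) :
    ∀ i ≤ N, ∀ j ≤ N, swap p (f i) * swap p (f j) ∈ H := by
  have adjacent : ∀ k, k + 1 ≤ N → swap p (f (k + 1)) * swap p (f k) ∈ H := by
    intro k
    induction k with
    | zero => exact fun _ => h₀
    | succ k ih =>
      intro hk
      have e : swap p (f (k + 1 + 1)) * swap p (f (k + 1))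
          = g * (swap p (f (k + 1)) * swap p (f k)) * g⁻¹ := calc
        _ = swap (g p) (g (f (k + 1))) * swap (g p) (g (f k)) := by
          rw [hgp, hgf k (by omega), hgf (k + 1) (by omega)]
        _ = _ := by rw [swap_apply_apply, swap_apply_apply]; group
      rw [e]
      exact mul_mem (mul_mem hg (ih (by omega))) (inv_mem hg)
  have from_zero : ∀ i ≤ N, swap p (f i) * swap p (f 0) ∈ H := by
    intro i
    induction i with
    | zero => simp
    | succ i ih => exact fun hi => swap_mul_swap_mem_trans (adjacent i hi) (ih (by omega))
  exact fun i hi j hj => swap_mul_swap_mem_trans (from_zero i hi)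
    (swap_mul_swap_mem_symm (from_zero j hj))

lemma exists_swap_eq_swap_mul_swap_mul_swap {p : α} {t : Set α} (hp : p ∉ t) {a b : α}
    (ha : a ∈ insert p t) (hb : b ∈ insert p t) (hab : a ≠ b) :
    ∃ u ∈ t, ∃ v ∈ t, ∃ w ∈ t, swap a b = swap p u * swap p v * swap p w := by
  rcases ha with rfl | ha
  · have hb : b ∈ t := hb.resolve_left (Ne.symm hab)
    exact ⟨b, hb, b, hb, b, hb, by simp⟩
  rcases hb with rfl | hb
  · exact ⟨a, ha, a, ha, a, ha, by simp [swap_comm]⟩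
  · refine ⟨a, ha, b, hb, a, ha, ?_⟩
    rw [swap_comm p b, swap_mul_swap_mul_swap (ne_of_mem_of_not_mem hb hp) (Ne.symm hab)]

lemma mul_mem_of_swap_mul_swap_mem {p : α} {t : Set α} (hp : p ∉ t)
    (h : ∀ x ∈ t, ∀ y ∈ t, swap p x * swap p y ∈ H) :
    ∀ τ₁ ∈ swapsOn (insert p t), ∀ τ₂ ∈ swapsOn (insert p t), τ₁ * τ₂ ∈ H := by
  rintro _ ⟨a, ha, b, hb, hab, rfl⟩ _ ⟨c, hc, d, hd, hcd, rfl⟩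
  obtain ⟨u, hu, v, hv, w, hw, e₁⟩ := exists_swap_eq_swap_mul_swap_mul_swap hp ha hb hab
  obtain ⟨u', hu', v', hv', w', hw', e₂⟩ := exists_swap_eq_swap_mul_swap_mul_swap hp hc hd hcd
  have e : swap a b * swap c d =
      swap p u * swap p v * (swap p w * swap p u') * (swap p v' * swap p w') := by
    rw [e₁, e₂]; group
  rw [e]
  exact mul_mem (mul_mem (h u hu v hv) (h w hw u' hu')) (h v' hv' w' hw')

lemma mem_or_mul_mem_of_mem_closure_swapsOn {s : Set α}
    (hH : ∀ τ₁ ∈ swapsOn s, ∀ τ₂ ∈ swapsOn s, τ₁ * τ₂ ∈ H) {τ₀ : Perm α}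
    (hτ₀ : τ₀ ∈ swapsOn s) {g : Perm α} (hg : g ∈ Subgroup.closure (swapsOn s)) :
    g ∈ H ∨ τ₀ * g ∈ H := by
  have step : ∀ τ ∈ swapsOn s, ∀ g, g ∈ H ∨ τ₀ * g ∈ H → τ * g ∈ H ∨ τ₀ * (τ * g) ∈ H := by
    rintro τ hτ g (hg | hg)
    · exact Or.inr (mul_assoc τ₀ τ g ▸ mul_mem (hH τ₀ hτ₀ τ hτ) hg)
    · have h := mul_mem (hH τ hτ τ₀ hτ₀) hg
      rw [mul_assoc, ← mul_assoc τ₀, mul_self_of_mem_swapsOn hτ₀, one_mul] at h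
      exact Or.inl h
  induction hg using Subgroup.closure_induction_left with
  | one => simp
  | mul_left τ hτ g _ ih => exact step τ hτ g ih
  | inv_mul_cancel τ hτ g _ ih => exact inv_eq_of_mem_swapsOn hτ ▸ step τ hτ g ih

end Pivot

section Parity

variable {α : Type*} [DecidableEq α]

lemma exists_finset_forall_mem_swapsOn (l : List (Perm α)) (hl : ∀ t ∈ l, t.IsSwap) :
    ∃ s : Finset α, ∀ t ∈ l, t ∈ swapsOn (s : Set α) := by
  induction l with
  | nil => exact ⟨∅, by simp⟩
  | cons t l ih =>
    obtain ⟨s, hs⟩ := ih fun u hu => hl u (List.mem_cons_of_mem t hu)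
    obtain ⟨a, b, hab, rfl⟩ := hl t List.mem_cons_self
    refine ⟨insert a (insert b s), ?_⟩
    rintro u (_ | ⟨_, hu⟩)
    · exact ⟨a, by simp, b, by simp, hab, rfl⟩
    · exact swapsOn_mono (fun x hx => by simp [Finset.mem_coe.mp hx]) (hs u hu)

lemma exists_list_ofSubtype_prod_eq {s : Finset α} (l : List (Perm α))
    (hl : ∀ t ∈ l, t ∈ swapsOn (s : Set α)) :
    ∃ l' : List (Perm s), (∀ t ∈ l', t.IsSwap) ∧ l'.length = l.length ∧
      Perm.ofSubtype l'.prod = l.prod := by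
  induction l with
  | nil => exact ⟨[], by simp, rfl, by simp⟩
  | cons t l ih =>
    obtain ⟨l', hl', hlen, hprod⟩ := ih fun u hu => hl u (List.mem_cons_of_mem t hu)
    obtain ⟨a, ha, b, hb, hab, rfl⟩ := hl t List.mem_cons_self
    refine ⟨swap ⟨a, ha⟩ ⟨b, hb⟩ :: l', ?_, by simp [hlen], ?_⟩
    · rintro u (_ | ⟨_, hu⟩)
      · exact ⟨_, _, by simpa using hab, rfl⟩
      · exact hl' u hu
    · rw [List.prod_cons, List.prod_cons, map_mul, hprod, Perm.ofSubtype_swap_eq]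

theorem even_length_iff_of_prod_eq {l₁ l₂ : List (Perm α)} (h₁ : ∀ t ∈ l₁, t.IsSwap)
    (h₂ : ∀ t ∈ l₂, t.IsSwap) (h : l₁.prod = l₂.prod) : Even l₁.length ↔ Even l₂.length := by
  obtain ⟨s, hs⟩ := exists_finset_forall_mem_swapsOn (l₁ ++ l₂) fun t ht =>
    (List.mem_append.mp ht).elim (h₁ t) (h₂ t)
  obtain ⟨l₁', h₁', hlen₁, hprod₁⟩ :=
    exists_list_ofSubtype_prod_eq l₁ fun t ht => hs t (List.mem_append_left l₂ ht)
  obtain ⟨l₂', h₂', hlen₂, hprod₂⟩ :=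
    exists_list_ofSubtype_prod_eq l₂ fun t ht => hs t (List.mem_append_right l₁ ht)
  have hsign := congrArg Perm.sign
    (Perm.ofSubtype_injective (hprod₁.trans (h.trans hprod₂.symm)))
  rw [Perm.sign_prod_list_swap h₁', Perm.sign_prod_list_swap h₂', hlen₁, hlen₂,
    Int.units_pow_eq_pow_mod_two, Int.units_pow_eq_pow_mod_two (-1) l₂.length] at hsign
  rw [Nat.even_iff, Nat.even_iff]
  rcases Nat.mod_two_eq_zero_or_one l₁.length with e₁ | e₁ <;>
    rcases Nat.mod_two_eq_zero_or_one l₂.length with e₂ | e₂ <;> simp_all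

end Parity

def evenPerms : Subgroup (Perm ℕ) where
  carrier := {σ | IsEvenPerm σ}
  one_mem' := ⟨[], by simp, rfl, by simp⟩
  mul_mem' := by
    rintro _ _ ⟨l₁, h₁, rfl, e₁⟩ ⟨l₂, h₂, rfl, e₂⟩
    exact ⟨l₁ ++ l₂, fun t ht => (List.mem_append.mp ht).elim (h₁ t) (h₂ t),
      List.prod_append, by simpa using e₁.add e₂⟩
  inv_mem' := by
    rintro _ ⟨l, hl, rfl, e⟩
    refine ⟨(l.map (·⁻¹)).reverse, fun t ht => ?_, (List.prod_inv_reverse l).symm, by simpa⟩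
    obtain ⟨_, hs, rfl⟩ := List.mem_map.mp (List.mem_reverse.mp ht)
    obtain ⟨a, b, hab, rfl⟩ := hl _ hs
    exact ⟨a, b, hab, swap_inv a b⟩

lemma list_prod_notMem_evenPerms {l : List (Perm ℕ)} (hl : ∀ t ∈ l, t.IsSwap)
    (hodd : ¬Even l.length) : l.prod ∉ evenPerms :=
  fun ⟨_, hl', hprod, heven⟩ => hodd ((even_length_iff_of_prod_eq hl hl' hprod.symm).mpr heven)

lemma swap_notMem_evenPerms {a b : ℕ} (hab : a ≠ b) : swap a b ∉ evenPerms := by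
  simpa using list_prod_notMem_evenPerms (l := [swap a b]) (by simpa using ⟨a, b, hab, rfl⟩)
    (by simp)

/-- `P_m ∩ A_m`. -/
def evenParityPerms (m : ℕ) : Subgroup (Perm ℕ) :=
  preservingPerms (· % 2) ⊓ (supportedPerms (Set.Icc 1 m) ⊓ evenPerms)

section CrossPerm

lemma crossPerm_apply (n j i : ℕ) :
    crossPerm n j i = if j ≤ i ∧ i < j + n then 2 * j + n - 1 - i else i := rfl

lemma crossPerm_one (j : ℕ) : crossPerm 1 j = 1 := by
  ext i
  simp only [crossPerm_apply, Perm.coe_one, id_eq]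
  split_ifs <;> omega

lemma crossPerm_add_four (n j : ℕ) :
    crossPerm (n + 4) j =
      swap j (j + n + 3) * swap (j + 1) (j + n + 2) * crossPerm n (j + 2) := by
  ext i
  simp only [crossPerm_apply, Perm.mul_apply, swap_apply_def]
  split_ifs <;> omega

lemma crossPerm_mem_preservingPerms {n : ℕ} (hn : n % 2 = 1) (j : ℕ) :
    crossPerm n j ∈ preservingPerms (· % 2) := by
  intro i
  simp only [crossPerm_apply]
  split_ifs <;> omega

lemma crossPerm_mem_supportedPerms (n j : ℕ) :
    crossPerm n j ∈ supportedPerms (Set.Ico j (j + n)) := by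
  intro i hi
  simp only [crossPerm_apply] at hi
  split_ifs at hi with h
  exacts [h, (hi rfl).elim]

lemma exists_crossPerm_eq_prod_mul_prod (K j : ℕ) :
    ∃ l₁ l₂ : List (Perm ℕ), l₁.length = K ∧ l₂.length = K ∧
      (∀ t ∈ l₁, t ∈ swapsOn {x | x % 2 = j % 2 ∧ j ≤ x ∧ x ≤ j + 4 * K}) ∧
      (∀ t ∈ l₂, t ∈ swapsOn {x | x % 2 ≠ j % 2 ∧ j ≤ x ∧ x ≤ j + 4 * K}) ∧
      crossPerm (4 * K + 1) j = l₁.prod * l₂.prod := by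
  induction K generalizing j with
  | zero => exact ⟨[], [], rfl, rfl, by simp, by simp, by simp [crossPerm_one]⟩
  | succ K ih =>
    obtain ⟨l₁, l₂, hlen₁, hlen₂, h₁, h₂, e⟩ := ih (j + 2)
    have hcomm : Commute (swap (j + 1) (j + 4 * K + 3)) l₁.prod := by
      refine commute_of_mem_supportedPerms (s := {x | x % 2 ≠ j % 2})
        (t := {x | x % 2 = j % 2}) (Set.disjoint_left.mpr fun x hx hx' => hx hx') ?_
        (list_prod_mem fun t ht => swapsOn_subset_supportedPerms _ (swapsOn_mono ?_ (h₁ t ht)))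
      · exact swapsOn_subset_supportedPerms _ ⟨j + 1, by rw [Set.mem_ofPred_eq]; omega,
          j + 4 * K + 3, by rw [Set.mem_ofPred_eq]; omega, by omega, rfl⟩
      · exact fun x hx => by rw [Set.mem_ofPred_eq] at hx ⊢; omega
    refine ⟨swap j (j + 4 * K + 4) :: l₁, swap (j + 1) (j + 4 * K + 3) :: l₂,
      by simp [hlen₁], by simp [hlen₂], ?_, ?_, ?_⟩
    · rintro t (_ | ⟨_, ht⟩)
      · exact ⟨j, by rw [Set.mem_ofPred_eq]; omega, j + 4 * K + 4,
          by rw [Set.mem_ofPred_eq]; omega, by omega, rfl⟩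
      · exact swapsOn_mono (fun x hx => by rw [Set.mem_ofPred_eq] at hx ⊢; omega) (h₁ t ht)
    · rintro t (_ | ⟨_, ht⟩)
      · exact ⟨j + 1, by rw [Set.mem_ofPred_eq]; omega, j + 4 * K + 3,
          by rw [Set.mem_ofPred_eq]; omega, by omega, rfl⟩
      · exact swapsOn_mono (fun x hx => by rw [Set.mem_ofPred_eq] at hx ⊢; omega) (h₂ t ht)
    · rw [show 4 * (K + 1) + 1 = 4 * K + 1 + 4 by ring, crossPerm_add_four, e,
        List.prod_cons, List.prod_cons, show j + (4 * K + 1) + 3 = j + 4 * K + 4 by ring,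
        show j + (4 * K + 1) + 2 = j + 4 * K + 3 by ring]
      exact hcomm.mul_mul_mul_comm _ _

lemma crossPerm_mem_evenPerms {n : ℕ} (hn : n % 4 = 1) (j : ℕ) : crossPerm n j ∈ evenPerms := by
  obtain ⟨K, rfl⟩ : ∃ K, n = 4 * K + 1 := ⟨n / 4, by omega⟩
  obtain ⟨l₁, l₂, hlen₁, hlen₂, h₁, h₂, e⟩ := exists_crossPerm_eq_prod_mul_prod K j
  refine ⟨l₁ ++ l₂, fun t ht => ?_, by rw [List.prod_append, e], ⟨K, by simp [hlen₁, hlen₂]⟩⟩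
  exact (List.mem_append.mp ht).elim (fun ht => isSwap_of_mem_swapsOn (h₁ t ht))
    (fun ht => isSwap_of_mem_swapsOn (h₂ t ht))

lemma crossPerm_succ_mul_crossPerm_apply {n j x : ℕ} (hjx : j ≤ x) (hx : x + 2 ≤ j + n) :
    (crossPerm n (j + 1) * crossPerm n j) x = x + 2 := by
  simp only [Perm.mul_apply, crossPerm_apply]
  split_ifs <;> omega

lemma crossPerm_succ_mul_crossPerm_apply_add (n j : ℕ) :
    (crossPerm n (j + 1) * crossPerm n j) (j + n + 1) = j + n + 1 := by
  simp only [Perm.mul_apply, crossPerm_apply]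
  split_ifs <;> omega

lemma crossPerm_word_eq_swap_mul_swap {n : ℕ} (h3 : 3 ≤ n) (j : ℕ) :
    crossPerm n (j + 1) * crossPerm n j * crossPerm n (j + 1) * crossPerm n (j + 2) =
      swap (j + n + 1) (j + 2) * swap (j + n + 1) j := by
  ext i
  simp only [Perm.mul_apply, crossPerm_apply, swap_apply_def]
  split_ifs <;> omega

end CrossPerm

section GeneratedGroup

variable {n : ℕ}

/-- For odd `n` and `j ∈ {1, 2}`: the points of `{1, …, n + 3}` of the same parity as `j`. -/
def parityClass (n j : ℕ) : Set ℕ := {x | x % 2 = j % 2 ∧ j ≤ x ∧ x ≤ j + n + 1}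

lemma mem_parityClass {j x : ℕ} :
    x ∈ parityClass n j ↔ x % 2 = j % 2 ∧ j ≤ x ∧ x ≤ j + n + 1 := Iff.rfl

lemma parityClass_finite (n j : ℕ) : (parityClass n j).Finite :=
  (Set.finite_Icc j (j + n + 1)).subset fun _ hx => hx.2

lemma crossPerm_mem_C {j : ℕ} (h1 : 1 ≤ j) (h4 : j ≤ 4) : crossPerm n j ∈ C n (n + 3) :=
  Subgroup.subset_closure ⟨j, h1, by omega, rfl⟩

lemma C_le_evenParityPerms (hn : n % 4 = 1) : C n (n + 3) ≤ evenParityPerms (n + 3) := by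
  refine (Subgroup.closure_le _).mpr ?_
  rintro _ ⟨j, h1, h4, rfl⟩
  refine ⟨crossPerm_mem_preservingPerms (by omega) j, ?_, crossPerm_mem_evenPerms hn j⟩
  refine supportedPerms_mono (fun x hx => ?_) (crossPerm_mem_supportedPerms n j)
  rw [Set.mem_Ico] at hx
  rw [Set.mem_Icc]
  omega

lemma swap_mul_swap_mem_C (h3 : 3 ≤ n) {j : ℕ} (h1 : 1 ≤ j) (h2 : j ≤ 2)
    {x y : ℕ} (hx : x % 2 = j % 2 ∧ j ≤ x ∧ x + 1 ≤ j + n)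
    (hy : y % 2 = j % 2 ∧ j ≤ y ∧ y + 1 ≤ j + n) :
    swap (j + n + 1) x * swap (j + n + 1) y ∈ C n (n + 3) := by
  have hg := mul_mem (crossPerm_mem_C (n := n) (j := j + 1) (by omega) (by omega))
    (crossPerm_mem_C (n := n) h1 (by omega))
  have h₀ : swap (j + n + 1) (j + 2 * 1) * swap (j + n + 1) (j + 2 * 0) ∈ C n (n + 3) := by
    rw [mul_one, mul_zero, add_zero, ← crossPerm_word_eq_swap_mul_swap h3]
    exact mul_mem (mul_mem hg (crossPerm_mem_C (by omega) (by omega)))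
      (crossPerm_mem_C (by omega) (by omega))
  have hshift := swap_mul_swap_mem_of_shift hg (crossPerm_succ_mul_crossPerm_apply_add n j)
    (f := fun k => j + 2 * k) (N := (n - 1) / 2)
    (fun k hk => (crossPerm_succ_mul_crossPerm_apply (by omega) (by omega)).trans (by ring)) h₀
  obtain ⟨i, rfl⟩ : ∃ i, x = j + 2 * i := ⟨(x - j) / 2, by omega⟩
  obtain ⟨k, rfl⟩ : ∃ k, y = j + 2 * k := ⟨(y - j) / 2, by omega⟩
  exact hshift i (by omega) k (by omega)

lemma mul_mem_C_of_mem_swapsOn (hn : n % 2 = 1) (h3 : 3 ≤ n) {j : ℕ} (h1 : 1 ≤ j)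
    (h2 : j ≤ 2) :
    ∀ τ₁ ∈ swapsOn (parityClass n j), ∀ τ₂ ∈ swapsOn (parityClass n j),
      τ₁ * τ₂ ∈ C n (n + 3) := by
  have e : parityClass n j =
      insert (j + n + 1) {x | x % 2 = j % 2 ∧ j ≤ x ∧ x + 1 ≤ j + n} := by
    ext x
    simp only [parityClass, Set.mem_insert_iff, Set.mem_ofPred_eq]
    omega
  rw [e]
  exact mul_mem_of_swap_mul_swap_mem (by rw [Set.mem_ofPred_eq]; omega)
    fun x hx y hy => swap_mul_swap_mem_C h3 h1 h2 hx hy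

lemma mem_C_of_mem_supportedPerms (hn : n % 4 = 1) (h3 : 3 ≤ n) {j : ℕ} (h1 : 1 ≤ j)
    (h2 : j ≤ 2) {u : Perm ℕ} (hu : u ∈ supportedPerms (parityClass n j)) :
    (u ∈ evenPerms → u ∈ C n (n + 3)) ∧
      (u ∉ evenPerms → swap j (j + 2) * u ∈ C n (n + 3)) := by
  have hτ₀ : swap j (j + 2) ∈ swapsOn (parityClass n j) :=
    ⟨j, mem_parityClass.mpr (by omega), j + 2, mem_parityClass.mpr (by omega), by omega, rfl⟩
  have hC : ∀ g ∈ C n (n + 3), g ∈ evenPerms := fun g hg => (C_le_evenParityPerms hn hg).2.2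
  rcases mem_or_mul_mem_of_mem_closure_swapsOn (mul_mem_C_of_mem_swapsOn (by omega) h3 h1 h2)
    hτ₀ ((closure_swapsOn_eq (parityClass_finite n j)).ge hu) with h | h
  · exact ⟨fun _ => h, fun hu' => (hu' (hC u h)).elim⟩
  · refine ⟨fun hu' => (swap_notMem_evenPerms (a := j) (b := j + 2) (by omega) ?_).elim,
      fun _ => h⟩
    simpa using mul_mem (hC _ h) (inv_mem hu')

lemma swap_mul_swap_mul_mem_C (hn : n % 4 = 1) (h3 : 3 ≤ n) {u v : Perm ℕ}
    (hu : u ∈ supportedPerms (parityClass n 1)) (hu' : u ∉ evenPerms)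
    (hv : v ∈ supportedPerms (parityClass n 2)) (hv' : v ∉ evenPerms) :
    swap 1 3 * swap 2 4 * (u * v) ∈ C n (n + 3) := by
  have hcomm : Commute u (swap 2 4) :=
    commute_of_mem_supportedPerms (s := parityClass n 1) (t := parityClass n 2)
      (Set.disjoint_left.mpr fun x hx hx' => by rw [mem_parityClass] at hx hx'; omega) hu
      (swapsOn_subset_supportedPerms _ ⟨2, mem_parityClass.mpr (by omega), 4,
        mem_parityClass.mpr (by omega), by omega, rfl⟩)
  rw [← hcomm.mul_mul_mul_comm]
  exact mul_mem ((mem_C_of_mem_supportedPerms hn h3 le_rfl one_le_two hu).2 hu')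
    ((mem_C_of_mem_supportedPerms hn h3 one_le_two le_rfl hv).2 hv')

lemma swap_one_three_mul_swap_two_four_mem_C (hn : n % 8 = 5) :
    swap 1 3 * swap 2 4 ∈ C n (n + 3) := by
  obtain ⟨K, rfl⟩ : ∃ K, n = 4 * K + 1 := ⟨n / 4, by omega⟩
  have hK : ¬Even K := Nat.not_even_iff.mpr (by omega)
  obtain ⟨l₁, l₂, hlen₁, hlen₂, h₁, h₂, e⟩ := exists_crossPerm_eq_prod_mul_prod K 1
  have hu : l₁.prod ∈ supportedPerms (parityClass (4 * K + 1) 1) := list_prod_mem fun t ht =>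
    swapsOn_subset_supportedPerms _ (swapsOn_mono (fun x hx => by
      rw [Set.mem_ofPred_eq] at hx; rw [mem_parityClass]; omega) (h₁ t ht))
  have hv : l₂.prod ∈ supportedPerms (parityClass (4 * K + 1) 2) := list_prod_mem fun t ht =>
    swapsOn_subset_supportedPerms _ (swapsOn_mono (fun x hx => by
      rw [Set.mem_ofPred_eq] at hx; rw [mem_parityClass]; omega) (h₂ t ht))
  have hu' : l₁.prod ∉ evenPerms :=
    list_prod_notMem_evenPerms (fun t ht => isSwap_of_mem_swapsOn (h₁ t ht)) (hlen₁ ▸ hK)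
  have hv' : l₂.prod ∉ evenPerms :=
    list_prod_notMem_evenPerms (fun t ht => isSwap_of_mem_swapsOn (h₂ t ht)) (hlen₂ ▸ hK)
  have h := mul_mem (swap_mul_swap_mul_mem_C (by omega) (by omega) hu hu' hv hv')
    (inv_mem (crossPerm_mem_C (n := 4 * K + 1) le_rfl (by omega)))
  rwa [← e, mul_inv_cancel_right] at h

theorem C_eq_evenParityPerms (hn : n % 8 = 5) : C n (n + 3) = evenParityPerms (n + 3) := by
  refine le_antisymm (C_le_evenParityPerms (by omega)) fun σ hσ => ?_
  obtain ⟨hpar, hsupp, heven⟩ := Subgroup.mem_inf.mp hσ |>.imp_right Subgroup.mem_inf.mp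
  obtain ⟨u, hu, v, hv, rfl⟩ := exists_mul_eq_of_mem_supportedPerms (p := fun x => x % 2 = 1)
    hsupp fun x => by rw [mem_preservingPerms.mp hpar x]
  have hu₁ : u ∈ supportedPerms (parityClass n 1) := by
    refine supportedPerms_mono (fun x hx => ?_) hu
    obtain ⟨⟨h1, h2⟩, hx⟩ := hx
    exact mem_parityClass.mpr (by omega)
  have hv₂ : v ∈ supportedPerms (parityClass n 2) := by
    refine supportedPerms_mono (fun x hx => ?_) hv
    obtain ⟨⟨h1, h2⟩, hx⟩ := hx
    exact mem_parityClass.mpr (by omega)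
  have hC₁ := mem_C_of_mem_supportedPerms (by omega) (by omega) le_rfl one_le_two hu₁
  have hC₂ := mem_C_of_mem_supportedPerms (by omega) (by omega) one_le_two le_rfl hv₂
  by_cases heu : u ∈ evenPerms
  · have hev : v ∈ evenPerms := by simpa using mul_mem (inv_mem heu) heven
    exact mul_mem (hC₁.1 heu) (hC₂.1 hev)
  · have hev : v ∉ evenPerms := fun hev => heu (by simpa using mul_mem heven (inv_mem hev))
    have h := mul_mem (inv_mem (swap_one_three_mul_swap_two_four_mem_C hn))
      (swap_mul_swap_mul_mem_C (by omega) (by omega) hu₁ heu hv₂ hev)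
    rwa [inv_mul_cancel_left] at h

end GeneratedGroup

theorem stmt18_general (n : ℕ) (hn : n % 8 = 5) :
    ∀ σ : Equiv.Perm ℕ, σ ∈ C n (n + 3) ↔
      ((∀ i, σ i % 2 = i % 2) ∧ (∀ i, σ i ≠ i → 1 ≤ i ∧ i ≤ n + 3) ∧ IsEvenPerm σ) :=
  fun σ => SetLike.ext_iff.mp (C_eq_evenParityPerms hn) σ

theorem stmt18 (n : ℕ) (hn : n % 8 = 5) (hn5 : 5 ≤ n) (hn205 : n ≤ 205) :
    ∀ σ : Equiv.Perm ℕ, σ ∈ C n (n + 3) ↔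
      ((∀ i, σ i % 2 = i % 2) ∧ (∀ i, σ i ≠ i → 1 ≤ i ∧ i ≤ n + 3) ∧ IsEvenPerm σ) :=
  stmt18_general n hn
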